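/- arXiv:1705.07557 — 2 statements merged into one kernel-verified Lean document; each statement's English description precedes it below -/
import Mathlib

section
/- Let Q : ℤʳ → ℤ be an S_r-invariant quadratic form with p = Q(e₁) and q = B_Q(e₁,e₂). Then 2p = q if and only if Q(y) = p·(Σᵢ yᵢ)² for all y ∈ ℤʳ. -/
/-!
Since `S_r` acts transitively on basis vectors and on pairs of distinct basis vectors,
`Q(eᵢ) = p` and `B_Q(eᵢ, eⱼ) = q` for all `i ≠ j`. A quadratic form is determined by its values
on a basis together with the values of its polar form on pairs of distinct basis vectors, and
`p (Σ yᵢ)²` has the data `p` and `2p`; so `Q = p (Σ yᵢ)²` as soon as `q = 2p`. Conversely,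
evaluating `p (Σ yᵢ)²` at `e₁ + e₂` gives `q = 4p - p - p`.
-/

section
variable {ι R N : Type*} [DecidableEq ι] [Ring R] {Q : (ι → R) → N}

theorem apply_single_eq_of_perm_invariant (hinv : ∀ (σ : Equiv.Perm ι) y, Q (y ∘ σ) = Q y)
    (i j : ι) : Q (Pi.single i 1) = Q (Pi.single j 1) := by
  simpa [Pi.single_comp_equiv] using (hinv (Equiv.swap i j) (Pi.single i 1)).symm

theorem polar_single_eq_of_perm_invariant [AddCommGroup N]
    (hinv : ∀ (σ : Equiv.Perm ι) y, Q (y ∘ σ) = Q y)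
    {i j k l : ι} (hij : i ≠ j) (hkl : k ≠ l) :
    QuadraticMap.polar Q (Pi.single i 1) (Pi.single j 1) =
      QuadraticMap.polar Q (Pi.single k 1) (Pi.single l 1) := by
  obtain ⟨σ, rfl, rfl⟩ :=
    MulAction.is_two_pretransitive_iff.mp (Equiv.Perm.isMultiplyPretransitive ι 2) hkl hij
  have hpair := hinv σ (Pi.single (σ k) 1 + Pi.single (σ l) 1)
  rw [Pi.add_comp, Pi.single_comp_equiv, Pi.single_comp_equiv, Equiv.symm_apply_apply,
    Equiv.symm_apply_apply] at hpair
  rw [Equiv.Perm.smul_def, Equiv.Perm.smul_def, QuadraticMap.polar, QuadraticMap.polar, ← hpair,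
    apply_single_eq_of_perm_invariant hinv (σ k) k, apply_single_eq_of_perm_invariant hinv (σ l) l]
end

namespace QuadraticMap

section
variable {ι R M N : Type*} [CommRing R] [AddCommGroup M] [AddCommGroup N] [Module R M] [Module R N]

theorem ext_basis {Q₁ Q₂ : QuadraticMap R M N} (b : Module.Basis ι R M)
    (hdiag : ∀ i, Q₁ (b i) = Q₂ (b i))
    (hoff : ∀ i j, i ≠ j → polar Q₁ (b i) (b j) = polar Q₂ (b i) (b j)) : Q₁ = Q₂ := by
  classical
  ext x
  rw [← b.linearCombination_repr x, apply_linearCombination, apply_linearCombination,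
    show ⇑Q₁ ∘ b = ⇑Q₂ ∘ b from funext hdiag]
  congr 1
  refine Finset.sum_congr rfl fun ij hij => ?_
  induction ij using Sym2.ind with
  | h i j =>
    have hij : i ≠ j := by simpa using (Finset.mem_filter.mp hij).2
    simp [hoff i j hij]
end

variable {M N : Type*} [AddCommGroup M] [AddCommGroup N]

def ofPolarAddLeft (Q : M → N) (hQ : ∀ (k : ℤ) (x : M), Q (k • x) = (k * k) • Q x)
    (hadd : ∀ x x' y, polar Q (x + x') y = polar Q x y + polar Q x' y) :
    QuadraticMap ℤ M N :=
  ofPolar Q hQ hadd fun k x y =>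
    map_zsmul (AddMonoidHom.mk' (polar Q · y) fun x x' => hadd x x' y) k x

theorem apply_eq_mul_sq_sum_iff_of_perm_invariant {ι R : Type*} [Fintype ι]
    [DecidableEq ι] [CommRing R] (Q : QuadraticMap R (ι → R) R)
    (hinv : ∀ (σ : Equiv.Perm ι) y, Q (y ∘ σ) = Q y) {i j : ι} (hij : i ≠ j) :
    2 * Q (Pi.single i 1) = polar Q (Pi.single i 1) (Pi.single j 1) ↔
      ∀ y, Q y = Q (Pi.single i 1) * (∑ k, y k) ^ 2 := by
  set p := Q (Pi.single i 1)
  constructor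
  · intro h
    have hQ : Q = p • sq.comp (Fintype.linearCombination R fun _ => 1) := by
      refine ext_basis (Pi.basisFun R ι) (fun k => ?_) (fun k l hkl => ?_)
      · simp [Fintype.linearCombination_apply, p, apply_single_eq_of_perm_invariant hinv k i]
      · rw [Pi.basisFun_apply, Pi.basisFun_apply,
          polar_single_eq_of_perm_invariant hinv hkl hij, ← h]
        simp [Fintype.linearCombination_apply, polar, Finset.sum_add_distrib]
        ring
    intro y
    rw [hQ]
    simp [Fintype.linearCombination_apply, sq]
    ring
  · intro h
    rw [polar, h (_ + _), h (Pi.single j 1)]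
    simp [Finset.sum_add_distrib]
    ring

end QuadraticMap

/-- For an `S_r`-invariant quadratic form `Q` on `ℤʳ` with `p = Q(e₁)`,
`q = B_Q(e₁,e₂)`: `2p = q` iff `Q(y) = p·(Σᵢ yᵢ)²` for all `y`. -/
theorem stmt4 (r : ℕ) (hr : 2 ≤ r)
    (Q : (Fin r → ℤ) → ℤ)
    (hQ : ∀ (k : ℤ) (y : Fin r → ℤ), Q (k • y) = k ^ 2 * Q y)
    (B : (Fin r → ℤ) → (Fin r → ℤ) → ℤ)
    (hBdef : ∀ y₁ y₂, B y₁ y₂ = Q (y₁ + y₂) - Q y₁ - Q y₂)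
    (hBadd : ∀ y₁ y₂ y₃, B (y₁ + y₂) y₃ = B y₁ y₃ + B y₂ y₃)
    (hinv : ∀ (σ : Equiv.Perm (Fin r)) (y : Fin r → ℤ), Q (y ∘ σ) = Q y)
    (p q : ℤ)
    (hp : p = Q (Pi.single (⟨0, by omega⟩ : Fin r) 1))
    (hq : q = B (Pi.single (⟨0, by omega⟩ : Fin r) 1)
              (Pi.single (⟨1, by omega⟩ : Fin r) 1)) :
    2 * p = q ↔ ∀ y : Fin r → ℤ, Q y = p * (∑ i, y i) ^ 2 := by
  have hB : B = QuadraticMap.polar Q := funext₂ hBdef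
  subst hB hp hq
  let Q' : QuadraticMap ℤ (Fin r → ℤ) ℤ :=
    .ofPolarAddLeft Q (fun k y => by rw [hQ, sq, smul_eq_mul]) hBadd
  exact Q'.apply_eq_mul_sq_sum_iff_of_perm_invariant hinv (by simp [Fin.ext_iff])
end

section
/- Let F be a field with surjective discrete valuation v, residue field k, residue map res, and tame symbol ∂(u,w) = (−1)^{v(u)v(w)} · res(w^{v(u)} u^{−v(w)}). Then for every u ∈ F^× with u ≠ 1, ∂(u, 1−u) = 1. -/
/-!
Split according to the sign of `v u`. If `v u > 0` then `1 - u` is a unit with residue `1`;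
if `v u = 0` then either `1 - u` is a unit or `res u = 1`; in both cases the symbol is a power
of `1`. If `v u < 0` then `v (1 - u) = v u =: n`, and `(1 - u) / u = u⁻¹ - 1` is a unit with
residue `-1`, so the symbol is `(-1) ^ (n * n + n) = 1` since `n * (n + 1)` is even.
-/

section

variable {F K : Type*} [Field F] [Field K]

structure IsIntValuation (v : F → ℤ) : Prop where
  map_mul : ∀ x y : F, x ≠ 0 → y ≠ 0 → v (x * y) = v x + v y
  min_le_map_add : ∀ x y : F, x ≠ 0 → y ≠ 0 → x + y ≠ 0 → min (v x) (v y) ≤ v (x + y)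

structure IsResidueMap (v : F → ℤ) (res : F → K) : Prop where
  map_one : res 1 = 1
  map_mul : ∀ x y : F, (x = 0 ∨ 0 ≤ v x) → (y = 0 ∨ 0 ≤ v y) → res (x * y) = res x * res y
  map_add : ∀ x y : F, (x = 0 ∨ 0 ≤ v x) → (y = 0 ∨ 0 ≤ v y) → res (x + y) = res x + res y
  map_eq_zero_of_pos : ∀ x : F, x ≠ 0 → 0 < v x → res x = 0

def tameSymbol (v : F → ℤ) (res : F → K) (u w : F) : K :=
  (-1 : K) ^ (v u * v w) * res (w ^ (v u) * u ^ (-(v w)))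

namespace IsIntValuation

variable {v : F → ℤ}

theorem map_one (hv : IsIntValuation v) : v 1 = 0 := by
  have := hv.map_mul 1 1 one_ne_zero one_ne_zero
  rw [one_mul] at this
  omega

theorem map_neg (hv : IsIntValuation v) {x : F} (hx : x ≠ 0) : v (-x) = v x := by
  have h := hv.map_mul (-x) (-x) (neg_ne_zero.mpr hx) (neg_ne_zero.mpr hx)
  rw [neg_mul_neg, hv.map_mul x x hx hx] at h
  omega

theorem map_inv (hv : IsIntValuation v) {x : F} (hx : x ≠ 0) : v x⁻¹ = -v x := by
  have := hv.map_mul x x⁻¹ hx (inv_ne_zero hx)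
  rw [mul_inv_cancel₀ hx, hv.map_one] at this
  omega

theorem map_zpow (hv : IsIntValuation v) {x : F} (hx : x ≠ 0) (n : ℤ) :
    v (x ^ n) = n * v x := by
  induction n using Int.induction_on with
  | zero => simp [hv.map_one]
  | succ i ih =>
    rw [zpow_add_one₀ hx, hv.map_mul _ _ (zpow_ne_zero _ hx) hx, ih]
    ring
  | pred i ih =>
    rw [zpow_sub_one₀ hx, hv.map_mul _ _ (zpow_ne_zero _ hx) (inv_ne_zero hx), ih,
      hv.map_inv hx]
    ring

theorem map_add_of_lt (hv : IsIntValuation v) {x y : F} (hx : x ≠ 0) (hy : y ≠ 0)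
    (hxy : v x < v y) : v (x + y) = v x := by
  have hsum : x + y ≠ 0 := by
    intro h
    rw [eq_neg_of_add_eq_zero_right h, hv.map_neg hx] at hxy
    exact hxy.false
  have hle := hv.min_le_map_add x y hx hy hsum
  have hge := hv.min_le_map_add (x + y) (-y) hsum (neg_ne_zero.mpr hy)
    (by rwa [add_neg_cancel_right])
  rw [add_neg_cancel_right, hv.map_neg hy] at hge
  omega

theorem map_one_sub_of_pos (hv : IsIntValuation v) {u : F} (hu : u ≠ 0) (hvu : 0 < v u) :
    v (1 - u) = 0 := by
  rw [sub_eq_add_neg, hv.map_add_of_lt one_ne_zero (neg_ne_zero.mpr hu)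
    (by rwa [hv.map_one, hv.map_neg hu]), hv.map_one]

theorem map_one_sub_of_neg (hv : IsIntValuation v) {u : F} (hu : u ≠ 0) (hvu : v u < 0) :
    v (1 - u) = v u := by
  rw [sub_eq_neg_add, hv.map_add_of_lt (neg_ne_zero.mpr hu) one_ne_zero
    (by rwa [hv.map_one, hv.map_neg hu]), hv.map_neg hu]

theorem map_one_sub_nonneg (hv : IsIntValuation v) {u : F} (hu : u ≠ 0) (hu1 : u ≠ 1)
    (hvu : 0 ≤ v u) : 0 ≤ v (1 - u) := by
  have h := hv.min_le_map_add 1 (-u) one_ne_zero (neg_ne_zero.mpr hu)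
    (by rwa [← sub_eq_add_neg, sub_ne_zero, ne_comm])
  rw [← sub_eq_add_neg, hv.map_one, hv.map_neg hu] at h
  omega

end IsIntValuation

namespace IsResidueMap

variable {v : F → ℤ} {res : F → K}

theorem mul_map_inv_of_val_eq_zero (hv : IsIntValuation v) (hr : IsResidueMap v res) {x : F}
    (hx : x ≠ 0) (hvx : v x = 0) : res x * res x⁻¹ = 1 := by
  rw [← hr.map_mul _ _ (.inr hvx.ge) (.inr (by rw [hv.map_inv hx, hvx, neg_zero])),
    mul_inv_cancel₀ hx, hr.map_one]

theorem map_zpow_of_val_eq_zero (hv : IsIntValuation v) (hr : IsResidueMap v res) {x : F}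
    (hx : x ≠ 0) (hvx : v x = 0) (n : ℤ) : res (x ^ n) = res x ^ n := by
  have hpow : ∀ m : ℤ, x ^ m = 0 ∨ 0 ≤ v (x ^ m) := fun m =>
    .inr (by rw [hv.map_zpow hx, hvx, mul_zero])
  have hunit := hr.mul_map_inv_of_val_eq_zero hv hx hvx
  have hres : res x ≠ 0 := left_ne_zero_of_mul_eq_one hunit
  induction n using Int.induction_on with
  | zero => simp [hr.map_one]
  | succ i ih =>
    rw [zpow_add_one₀ hx, hr.map_mul _ _ (hpow _) (.inr hvx.ge), ih, zpow_add_one₀ hres]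
  | pred i ih =>
    rw [zpow_sub_one₀ hx, hr.map_mul _ _ (hpow _) (.inr (by rw [hv.map_inv hx, hvx, neg_zero])),
      ih, zpow_sub_one₀ hres, ← inv_eq_of_mul_eq_one_right hunit]

theorem map_one_sub (hv : IsIntValuation v) (hr : IsResidueMap v res) {u : F} (hu : u ≠ 0)
    (hu1 : u ≠ 1) (hvu : 0 ≤ v u) : res (1 - u) = 1 - res u := by
  have h := hr.map_add (1 - u) u (.inr (hv.map_one_sub_nonneg hu hu1 hvu)) (.inr hvu)
  rw [sub_add_cancel, hr.map_one] at h
  rw [h, add_sub_cancel_right]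

end IsResidueMap

variable {v : F → ℤ} {res : F → K}

theorem tameSymbol_one_sub_of_pos (hv : IsIntValuation v) (hr : IsResidueMap v res) {u : F}
    (hu : u ≠ 0) (hu1 : u ≠ 1) (hvu : 0 < v u) : tameSymbol v res u (1 - u) = 1 := by
  have hw := hv.map_one_sub_of_pos hu hvu
  rw [tameSymbol, hw, mul_zero, zpow_zero, one_mul, neg_zero, zpow_zero, mul_one,
    hr.map_zpow_of_val_eq_zero hv (sub_ne_zero.mpr hu1.symm) hw, hr.map_one_sub hv hu hu1 hvu.le,
    hr.map_eq_zero_of_pos u hu hvu, sub_zero, one_zpow]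

theorem tameSymbol_one_sub_of_val_eq_zero (hv : IsIntValuation v) (hr : IsResidueMap v res)
    {u : F} (hu : u ≠ 0) (hu1 : u ≠ 1) (hvu : v u = 0) : tameSymbol v res u (1 - u) = 1 := by
  rw [tameSymbol, hvu, zero_mul, zpow_zero, one_mul, zpow_zero, one_mul,
    hr.map_zpow_of_val_eq_zero hv hu hvu]
  rcases (hv.map_one_sub_nonneg hu hu1 hvu.ge).eq_or_lt with hw | hw
  · rw [← hw, neg_zero, zpow_zero]
  · have h := hr.map_one_sub hv hu hu1 hvu.ge
    rw [hr.map_eq_zero_of_pos _ (sub_ne_zero.mpr hu1.symm) hw, eq_comm, sub_eq_zero] at h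
    rw [← h, one_zpow]

theorem tameSymbol_one_sub_of_neg (hv : IsIntValuation v) (hr : IsResidueMap v res)
    {u : F} (hu : u ≠ 0) (hu1 : u ≠ 1) (hvu : v u < 0) : tameSymbol v res u (1 - u) = 1 := by
  have hw0 : 1 - u ≠ 0 := sub_ne_zero.mpr hu1.symm
  have ht : (1 - u) * u⁻¹ = u⁻¹ - 1 := by rw [sub_mul, one_mul, mul_inv_cancel₀ hu]
  have hvt : v (u⁻¹ - 1) = 0 := by
    rw [← ht, hv.map_mul _ _ hw0 (inv_ne_zero hu), hv.map_one_sub_of_neg hu hvu, hv.map_inv hu,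
      add_neg_cancel]
  have hres_t : res (u⁻¹ - 1) = -1 := by
    have h := hr.map_add (u⁻¹ - 1) 1 (.inr hvt.ge) (.inr hv.map_one.ge)
    rw [sub_add_cancel, hr.map_one,
      hr.map_eq_zero_of_pos _ (inv_ne_zero hu) (by rw [hv.map_inv hu]; omega)] at h
    linear_combination -h
  have hpow : (1 - u) ^ v u * u ^ (-v u) = (u⁻¹ - 1) ^ v u := by
    rw [← ht, mul_zpow, inv_zpow, zpow_neg]
  rw [tameSymbol, hv.map_one_sub_of_neg hu hvu, hpow,
    hr.map_zpow_of_val_eq_zero hv (ht ▸ mul_ne_zero hw0 (inv_ne_zero hu)) hvt, hres_t,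
    ← zpow_add₀ (neg_ne_zero.mpr one_ne_zero)]
  exact Even.neg_one_zpow (by simpa [mul_add] using Int.even_mul_succ_self (v u))

theorem tameSymbol_one_sub (hv : IsIntValuation v) (hr : IsResidueMap v res) {u : F}
    (hu : u ≠ 0) (hu1 : u ≠ 1) : tameSymbol v res u (1 - u) = 1 := by
  rcases lt_trichotomy (v u) 0 with hvu | hvu | hvu
  · exact tameSymbol_one_sub_of_neg hv hr hu hu1 hvu
  · exact tameSymbol_one_sub_of_val_eq_zero hv hr hu hu1 hvu
  · exact tameSymbol_one_sub_of_pos hv hr hu hu1 hvu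

end

theorem stmt13_general (F K : Type*) [Field F] [Field K]
    (v : F → ℤ) (res : F → K)
    (hv_mul : ∀ x y : F, x ≠ 0 → y ≠ 0 → v (x * y) = v x + v y)
    (hv_add : ∀ x y : F, x ≠ 0 → y ≠ 0 → x + y ≠ 0 → min (v x) (v y) ≤ v (x + y))
    (hres_one : res 1 = 1)
    (hres_mul : ∀ x y : F, (x = 0 ∨ 0 ≤ v x) → (y = 0 ∨ 0 ≤ v y) →
      res (x * y) = res x * res y)
    (hres_add : ∀ x y : F, (x = 0 ∨ 0 ≤ v x) → (y = 0 ∨ 0 ≤ v y) →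
      res (x + y) = res x + res y)
    (hres_ker : ∀ x : F, x ≠ 0 → 0 ≤ v x → (res x = 0 ↔ 0 < v x))
    (tame : F → F → K)
    (htame : ∀ u w : F,
      tame u w = (-1 : K) ^ (v u * v w) * res (w ^ (v u) * u ^ (-(v w)))) :
    ∀ u : F, u ≠ 0 → u ≠ 1 → tame u (1 - u) = 1 := by
  intro u hu hu1
  have hv : IsIntValuation v := ⟨hv_mul, hv_add⟩
  have hr : IsResidueMap v res :=
    ⟨hres_one, hres_mul, hres_add, fun x hx hvx => (hres_ker x hx hvx.le).mpr hvx⟩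
  rw [htame]
  exact tameSymbol_one_sub hv hr hu hu1

/-- Steinberg relation for the tame symbol: `∂(u, 1-u) = 1` for `u ≠ 0, 1`. -/
theorem stmt13 (F K : Type*) [Field F] [Field K]
    (v : F → ℤ) (res : F → K)
    (hv_mul : ∀ x y : F, x ≠ 0 → y ≠ 0 → v (x * y) = v x + v y)
    (hv_add : ∀ x y : F, x ≠ 0 → y ≠ 0 → x + y ≠ 0 → min (v x) (v y) ≤ v (x + y))
    (hv_surj : ∀ n : ℤ, ∃ x : F, x ≠ 0 ∧ v x = n)
    (hres_zero : res 0 = 0) (hres_one : res 1 = 1)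
    (hres_mul : ∀ x y : F, (x = 0 ∨ 0 ≤ v x) → (y = 0 ∨ 0 ≤ v y) →
      res (x * y) = res x * res y)
    (hres_add : ∀ x y : F, (x = 0 ∨ 0 ≤ v x) → (y = 0 ∨ 0 ≤ v y) →
      res (x + y) = res x + res y)
    (hres_ker : ∀ x : F, x ≠ 0 → 0 ≤ v x → (res x = 0 ↔ 0 < v x))
    (tame : F → F → K)
    (htame : ∀ u w : F,
      tame u w = (-1 : K) ^ (v u * v w) * res (w ^ (v u) * u ^ (-(v w)))) :
    ∀ u : F, u ≠ 0 → u ≠ 1 → tame u (1 - u) = 1 :=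
  stmt13_general F K v res hv_mul hv_add hres_one hres_mul hres_add hres_ker tame htame
end
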